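/- For a = 0, 1, 2, 3 let c_a ∈ ℝ³ and r_a ∈ ℝ represent four oriented spheres (centers and signed radii). Define the Möbius lifts m_a = (c_a, 1, |c_a|² − r_a²) ∈ ℝ⁵ and the Lie lifts s_a = (c_a, 1, |c_a|² − r_a², r_a) ∈ ℝ⁶. Two oriented spheres (c, r) and (c′, r′) are in oriented contact if |c − c′|² = (r − r′)². Then: (i) if m₀, m₁, m₂ are linearly independent, the four Möbius lifts span a subspace of dimension at most 3, and there exists an oriented sphere (c⁰, r⁰) with r⁰ ≠ 0 in oriented contact with all four spheres, then the four Lie lifts also span a subspace of dimension at most 3 (the quadruple is an elementary quadrilateral of an R-congruence); (ii) conversely, if s₃ lies in the span of s₀, s₁, s₂, then every oriented sphere in oriented contact with the spheres 0, 1 and 2 is in oriented contact with sphere 3 as well. -/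

import Mathlib

/-!
Oriented contact of `(c, r)` with `(c', r')` says that the Lie lifts of the two spheres are
orthogonal for the Lie inner product; pairing with a fixed Lie lift is linear, so contact with
three spheres passes to every vector in the span of their Lie lifts, which is (ii).
For (i), the rank hypothesis puts `m₃` in the span of `m₀, m₁, m₂`, so some `w` in the span of
`s₀, s₁, s₂` agrees with `s₃` except possibly in the radius coordinate. Both are orthogonal to the
Lie lift of the touching sphere `(c⁰, r⁰)`, and this pairing sees the radius coordinate with
weight `-r⁰ ≠ 0`; hence `s₃ = w`.
-/

/-- Oriented contact of two oriented spheres `(c, r)`, `(c′, r′)` in ℝ³. -/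
def OrientedContact (c : EuclideanSpace ℝ (Fin 3)) (r : ℝ)
    (c' : EuclideanSpace ℝ (Fin 3)) (r' : ℝ) : Prop :=
  ‖c - c'‖ ^ 2 = (r - r') ^ 2

/-- The Möbius lift `(c, 1, |c|² − r²)` of an oriented sphere. -/
noncomputable def moebiusLift (c : EuclideanSpace ℝ (Fin 3)) (r : ℝ) :
    EuclideanSpace ℝ (Fin 3) × ℝ × ℝ :=
  (c, 1, ‖c‖ ^ 2 - r ^ 2)

/-- The Lie lift `(c, 1, |c|² − r², r)` of an oriented sphere. -/
noncomputable def lieLift (c : EuclideanSpace ℝ (Fin 3)) (r : ℝ) :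
    EuclideanSpace ℝ (Fin 3) × ℝ × ℝ × ℝ :=
  (c, 1, ‖c‖ ^ 2 - r ^ 2, r)

open Module Submodule

theorem range_vecCons_three {α : Type*} (a b c : α) :
    Set.range ![a, b, c] = ({a, b, c} : Set α) := by
  simp only [Matrix.range_cons, Matrix.range_empty, Set.union_empty, Set.singleton_union]

theorem set_four_eq_insert_last {α : Type*} (a b c d : α) :
    ({a, b, c, d} : Set α) = insert d {a, b, c} := by
  ext; simp only [Set.mem_insert_iff, Set.mem_singleton_iff]; tauto

section SpanOfThree

variable {K V : Type*} [DivisionRing K] [AddCommGroup V] [Module K V]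

theorem finrank_span_triple_le (a b c : V) : finrank K (span K ({a, b, c} : Set V)) ≤ 3 := by
  have h := finrank_range_le_card (R := K) ![a, b, c]
  rwa [range_vecCons_three, Fintype.card_fin] at h

theorem mem_span_of_linearIndependent_of_finrank_span_le {a b c d : V}
    [FiniteDimensional K (span K ({a, b, c, d} : Set V))] (hind : LinearIndependent K ![a, b, c])
    (hrank : finrank K (span K ({a, b, c, d} : Set V)) ≤ 3) :
    d ∈ span K ({a, b, c} : Set V) := by
  have hthree := finrank_span_eq_card hind
  rw [range_vecCons_three, Fintype.card_fin] at hthree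
  have hle : span K ({a, b, c} : Set V) ≤ span K {a, b, c, d} := by
    rw [set_four_eq_insert_last]; exact span_mono (Set.subset_insert d _)
  rw [eq_of_le_of_finrank_le hle (hthree ▸ hrank)]
  exact subset_span (by simp)

end SpanOfThree

section LieForm

variable {E : Type*} [NormedAddCommGroup E] [InnerProductSpace ℝ E]

/-- The Lie inner product `⟨c, c'⟩ - (t u' + u t') / 2 - ρ ρ'` of `(c, t, u, ρ)` with the Lie lift
`(c', 1, ‖c'‖² - r'², r')`. -/
noncomputable def lieContactForm (c' : E) (r' : ℝ) : E × ℝ × ℝ × ℝ →ₗ[ℝ] ℝ where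
  toFun v := inner ℝ v.1 c' - (v.2.1 * (‖c'‖ ^ 2 - r' ^ 2) + v.2.2.1) / 2 - v.2.2.2 * r'
  map_add' v w := by simp only [Prod.fst_add, Prod.snd_add, inner_add_left]; ring
  map_smul' a v := by
    simp only [Prod.smul_fst, Prod.smul_snd, real_inner_smul_left, smul_eq_mul, RingHom.id_apply]
    ring

def lieToMoebius : E × ℝ × ℝ × ℝ →ₗ[ℝ] E × ℝ × ℝ :=
  LinearMap.prodMap LinearMap.id (LinearMap.prodMap LinearMap.id (LinearMap.fst ℝ ℝ ℝ))

theorem eq_of_lieToMoebius_eq_of_lieContactForm_eq {c' : E} {r' : ℝ} (hr' : r' ≠ 0)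
    {v w : E × ℝ × ℝ × ℝ} (hπ : lieToMoebius v = lieToMoebius w)
    (hform : lieContactForm c' r' v = lieContactForm c' r' w) : v = w := by
  obtain ⟨x, t, u, ρ⟩ := v
  obtain ⟨x', t', u', ρ'⟩ := w
  simp only [lieToMoebius, LinearMap.prodMap_apply, LinearMap.id_apply, LinearMap.fst_apply,
    Prod.mk.injEq] at hπ
  obtain ⟨rfl, rfl, rfl⟩ := hπ
  simp only [lieContactForm, LinearMap.coe_mk, AddHom.coe_mk, sub_right_inj] at hform
  rw [mul_right_cancel₀ hr' hform]

end LieForm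

theorem lieToMoebius_lieLift (c : EuclideanSpace ℝ (Fin 3)) (r : ℝ) :
    lieToMoebius (lieLift c r) = moebiusLift c r := rfl

theorem lieContactForm_lieLift_eq_zero_iff {c c' : EuclideanSpace ℝ (Fin 3)} {r r' : ℝ} :
    lieContactForm c' r' (lieLift c r) = 0 ↔ OrientedContact c r c' r' := by
  have h : lieContactForm c' r' (lieLift c r) = -(‖c - c'‖ ^ 2 - (r - r') ^ 2) / 2 := by
    simp only [lieContactForm, lieLift, LinearMap.coe_mk, AddHom.coe_mk, norm_sub_sq_real]
    ring
  rw [h, OrientedContact]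
  constructor <;> intro h <;> linarith

theorem span_lieLift_triple_le_ker {c₀ c₁ c₂ c' : EuclideanSpace ℝ (Fin 3)} {r₀ r₁ r₂ r' : ℝ}
    (h₀ : OrientedContact c₀ r₀ c' r') (h₁ : OrientedContact c₁ r₁ c' r')
    (h₂ : OrientedContact c₂ r₂ c' r') :
    span ℝ {lieLift c₀ r₀, lieLift c₁ r₁, lieLift c₂ r₂} ≤ LinearMap.ker (lieContactForm c' r') := by
  simp only [span_le, Set.insert_subset_iff, Set.singleton_subset_iff, SetLike.mem_coe,
    LinearMap.mem_ker, lieContactForm_lieLift_eq_zero_iff]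
  exact ⟨h₀, h₁, h₂⟩

/-- **Characterization of R-congruences among Q-congruences.**
(i) If the Möbius lifts of four oriented spheres span a subspace of dimension at
most 3 (Q-congruence quadrilateral), the first three lifts are linearly independent,
and there is a non-point sphere in oriented contact with all four, then the Lie
lifts also span a subspace of dimension at most 3 (R-congruence quadrilateral).
(ii) Conversely, if the fourth Lie lift lies in the span of the first three, then
any sphere in oriented contact with the first three spheres is in oriented contact
with the fourth as well. -/
theorem rcongruence_characterization
    (c : Fin 4 → EuclideanSpace ℝ (Fin 3)) (r : Fin 4 → ℝ) :
    ((LinearIndependent ℝ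
        ![moebiusLift (c 0) (r 0), moebiusLift (c 1) (r 1),
          moebiusLift (c 2) (r 2)] →
      Module.finrank ℝ
        ↥(Submodule.span ℝ
          ({moebiusLift (c 0) (r 0), moebiusLift (c 1) (r 1),
            moebiusLift (c 2) (r 2), moebiusLift (c 3) (r 3)} :
            Set (EuclideanSpace ℝ (Fin 3) × ℝ × ℝ))) ≤ 3 →
      (∃ (c0 : EuclideanSpace ℝ (Fin 3)) (r0 : ℝ), r0 ≠ 0 ∧
        ∀ a : Fin 4, OrientedContact (c a) (r a) c0 r0) →
      Module.finrank ℝ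
        ↥(Submodule.span ℝ
          ({lieLift (c 0) (r 0), lieLift (c 1) (r 1),
            lieLift (c 2) (r 2), lieLift (c 3) (r 3)} :
            Set (EuclideanSpace ℝ (Fin 3) × ℝ × ℝ × ℝ))) ≤ 3)) ∧
    ((lieLift (c 3) (r 3) ∈
        Submodule.span ℝ
          ({lieLift (c 0) (r 0), lieLift (c 1) (r 1), lieLift (c 2) (r 2)} :
            Set (EuclideanSpace ℝ (Fin 3) × ℝ × ℝ × ℝ))) →
      ∀ (c' : EuclideanSpace ℝ (Fin 3)) (r' : ℝ),
        OrientedContact (c 0) (r 0) c' r' →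
        OrientedContact (c 1) (r 1) c' r' →
        OrientedContact (c 2) (r 2) c' r' →
        OrientedContact (c 3) (r 3) c' r') := by
  refine ⟨fun hind hrank ⟨c₀, r₀, hr₀, hcontact⟩ => ?_, fun hmem c' r' h₀ h₁ h₂ => ?_⟩
  · have hker := span_lieLift_triple_le_ker (hcontact 0) (hcontact 1) (hcontact 2)
    have hm₃ := mem_span_of_linearIndependent_of_finrank_span_le hind hrank
    obtain ⟨w, hw, hπ⟩ : ∃ w ∈ span ℝ {lieLift (c 0) (r 0), lieLift (c 1) (r 1),
        lieLift (c 2) (r 2)}, lieToMoebius w = lieToMoebius (lieLift (c 3) (r 3)) := by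
      rw [← mem_map, map_span]
      simpa only [Set.image_insert_eq, Set.image_singleton, lieToMoebius_lieLift] using hm₃
    have hs₃ : lieLift (c 3) (r 3) = w := by
      refine eq_of_lieToMoebius_eq_of_lieContactForm_eq (c' := c₀) hr₀ hπ.symm ?_
      rw [hker hw, lieContactForm_lieLift_eq_zero_iff.mpr (hcontact 3)]
    rw [set_four_eq_insert_last, span_insert_eq_span (hs₃ ▸ hw)]
    exact finrank_span_triple_le _ _ _
  · exact lieContactForm_lieLift_eq_zero_iff.mp (span_lieLift_triple_le_ker h₀ h₁ h₂ hmem)
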